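/- arXiv:2211.00885 — 4 statements merged into one kernel-verified Lean document; each statement's English description precedes it below -/
import Mathlib

section
/- Let G : [0,1] → ℝ be a continuously differentiable function with G(1) = 0. Then the limit as ε → 0⁺ of ε ∫₀¹ G(x) / (x · (log(e/x))^{1+ε}) dx equals G(0). -/
open MeasureTheory Filter Topology Real Set


noncomputable def resW (ε x : ℝ) : ℝ := 1 / (x * (1 - Real.log x) ^ (1 + ε))

lemma resW_hasDerivAt {ε x : ℝ} (hε : 0 < ε) (hx : 0 < x) (hx1 : x ≤ 1) :
    HasDerivAt (fun y => (1 - Real.log y) ^ (-ε) / ε) (resW ε x) x := by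
  have hb0 : (0 : ℝ) < 1 - Real.log x := by
    have : Real.log x ≤ 0 := Real.log_nonpos hx.le hx1
    linarith
  have h1 : HasDerivAt (fun y : ℝ => 1 - Real.log y) (-x⁻¹) x := by
    simpa using (Real.hasDerivAt_log hx.ne').const_sub 1
  have h2 : HasDerivAt (fun t : ℝ => t ^ (-ε)) (-ε * (1 - Real.log x) ^ (-ε - 1))
      (1 - Real.log x) := Real.hasDerivAt_rpow_const (Or.inl hb0.ne')
  have h4 : HasDerivAt (fun y => (1 - Real.log y) ^ (-ε) / ε)
      (-ε * (1 - Real.log x) ^ (-ε - 1) * -x⁻¹ / ε) x := by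
    have := (h2.comp x h1).div_const ε; exact this
  convert h4 using 1
  have hrpow : (1 - Real.log x) ^ (-ε - 1) = ((1 - Real.log x) ^ (1 + ε))⁻¹ := by
    rw [show -ε - 1 = -(1 + ε) by ring, Real.rpow_neg hb0.le]
  have hpos : (0:ℝ) < (1 - Real.log x) ^ (1 + ε) := Real.rpow_pos_of_pos hb0 _
  rw [resW, hrpow]
  field_simp

lemma resW_intervalIntegral {ε a : ℝ} (hε : 0 < ε) (ha : 0 < a) (ha1 : a ≤ 1) :
    ∫ x in a..1, resW ε x = (1 - (1 - Real.log a) ^ (-ε)) / ε := by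
  have hmem : ∀ x ∈ uIcc a 1, 0 < x ∧ x ≤ 1 := by
    intro x hx
    rw [uIcc_of_le ha1] at hx
    exact ⟨lt_of_lt_of_le ha hx.1, hx.2⟩
  have hcont : ContinuousOn (resW ε) (uIcc a 1) := by
    apply continuousOn_const.div
    · apply continuousOn_id.mul
      apply ContinuousOn.rpow_const
      · exact continuousOn_const.sub (Real.continuousOn_log.mono (fun x hx => by
          simpa using (hmem x hx).1.ne'))
      · intro x hx
        right; positivity
    · intro x hx
      obtain ⟨h0, h1⟩ := hmem x hx
      have hb0 : (0 : ℝ) < 1 - Real.log x := by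
        have := Real.log_nonpos h0.le h1; linarith
      have := Real.rpow_pos_of_pos hb0 (1 + ε)
      positivity
  have := intervalIntegral.integral_eq_sub_of_hasDerivAt
    (f := fun y => (1 - Real.log y) ^ (-ε) / ε) (f' := resW ε)
    (fun x hx => resW_hasDerivAt hε (hmem x hx).1 (hmem x hx).2)
    (hcont.intervalIntegrable)
  rw [this]
  simp [Real.log_one, Real.one_rpow]
  ring



lemma resW_nonneg {ε x : ℝ} (hx : 0 < x) (hx1 : x ≤ 1) : 0 ≤ resW ε x := by
  have hb0 : (0 : ℝ) < 1 - Real.log x := by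
    have := Real.log_nonpos hx.le hx1; linarith
  have := Real.rpow_pos_of_pos hb0 (1 + ε)
  unfold resW; positivity

lemma resW_contOn {ε a b : ℝ} (ha : 0 < a) (hb1 : b ≤ 1) : ContinuousOn (resW ε) (Icc a b) := by
  apply continuousOn_const.div
  · apply continuousOn_id.mul
    apply ContinuousOn.rpow_const
    · exact continuousOn_const.sub (Real.continuousOn_log.mono (fun x hx => by
        simp only [mem_compl_iff, mem_singleton_iff]
        exact (lt_of_lt_of_le ha hx.1).ne'))
    · intro x hx
      have hb0 : (0 : ℝ) < 1 - Real.log x := by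
        have := Real.log_nonpos (lt_of_lt_of_le ha hx.1).le (hx.2.trans hb1); linarith
      left; exact hb0.ne'
  · intro x hx
    have h0 : 0 < x := lt_of_lt_of_le ha hx.1
    have hb0 : (0 : ℝ) < 1 - Real.log x := by
      have := Real.log_nonpos h0.le (hx.2.trans hb1); linarith
    have := Real.rpow_pos_of_pos hb0 (1 + ε)
    positivity

lemma resW_integrableOn {ε : ℝ} (hε : 0 < ε) : IntegrableOn (resW ε) (Ioc (0:ℝ) 1) := by
  set a : ℕ → ℝ := fun n => 1 / (n + 1) with ha_def
  have hapos : ∀ n : ℕ, 0 < a n := fun n => by positivity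
  have hale : ∀ n : ℕ, a n ≤ 1 := fun n => by
    rw [ha_def]; rw [div_le_one (by positivity)]; exact le_add_of_nonneg_left (Nat.cast_nonneg n)
  have hfi : ∀ n : ℕ, IntegrableOn (resW ε) (Ioc (a n) 1) := fun n =>
    ((resW_contOn (hapos n) le_rfl).integrableOn_Icc).mono_set Ioc_subset_Icc_self
  have hatend : Tendsto a atTop (𝓝 0) := tendsto_one_div_add_atTop_nhds_zero_nat
  apply integrableOn_Ioc_of_intervalIntegral_norm_bounded_left
    (I := 1 / ε) hfi hatend
  apply Eventually.of_forall
  intro n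
  have heq : (∫ x in Ioc (a n) 1, ‖resW ε x‖) = ∫ x in (a n)..1, resW ε x := by
    rw [intervalIntegral.integral_of_le (hale n)]
    apply setIntegral_congr_fun measurableSet_Ioc
    intro x hx
    exact Real.norm_of_nonneg (resW_nonneg (lt_trans (hapos n) hx.1) hx.2)
  rw [heq, resW_intervalIntegral hε (hapos n) (hale n)]
  have : 0 ≤ (1 - Real.log (a n)) ^ (-ε) := Real.rpow_nonneg (by
    have := Real.log_nonpos (hapos n).le (hale n); linarith) _
  have h1 : 1 - (1 - Real.log (a n)) ^ (-ε) ≤ 1 := by linarith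
  gcongr

lemma resW_integral {ε : ℝ} (hε : 0 < ε) :
    ∫ x in Ioc (0:ℝ) 1, resW ε x = 1 / ε := by
  set a : ℕ → ℝ := fun n => 1 / (n + 1) with ha_def
  have hapos : ∀ n : ℕ, 0 < a n := fun n => by positivity
  have hale : ∀ n : ℕ, a n ≤ 1 := fun n => by
    rw [ha_def]; rw [div_le_one (by positivity)]; exact le_add_of_nonneg_left (Nat.cast_nonneg n)
  have hatend : Tendsto a atTop (𝓝 0) := tendsto_one_div_add_atTop_nhds_zero_nat
  have hcover : AECover (volume.restrict (Ioc (0:ℝ) 1)) atTop (fun n => Ioc (a n) 1) :=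
    aecover_Ioc_of_Ioc hatend tendsto_const_nhds
  apply hcover.integral_eq_of_tendsto _ (resW_integrableOn hε)
  have hlog : Tendsto (fun n : ℕ => 1 - Real.log (a n)) atTop atTop := by
    have h1 : ∀ n : ℕ, 1 - Real.log (a n) = 1 + Real.log (n + 1) := by
      intro n
      rw [ha_def]
      simp [Real.log_div one_ne_zero (by positivity : ((n:ℝ) + 1) ≠ 0)]
    rw [funext h1]
    apply tendsto_atTop_add_const_left
    exact Real.tendsto_log_atTop.comp (tendsto_atTop_add_const_right _ _ tendsto_natCast_atTop_atTop)
  have hpow : Tendsto (fun n : ℕ => (1 - Real.log (a n)) ^ (-ε)) atTop (𝓝 0) :=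
    (tendsto_rpow_neg_atTop hε).comp hlog
  have := ((tendsto_const_nhds (x := (1:ℝ))).sub hpow).div_const ε
  simp only [sub_zero] at this
  refine Tendsto.congr (fun n => ?_) this
  rw [Measure.restrict_restrict measurableSet_Ioc,
    inter_eq_left.mpr (Ioc_subset_Ioc_left (hapos n).le),
    ← resW_intervalIntegral hε (hapos n) (hale n), intervalIntegral.integral_of_le (hale n)]



lemma resW_contOn' {ε : ℝ} : ContinuousOn (resW ε) (Ioc (0:ℝ) 1) := by
  apply continuousOn_const.div
  · apply continuousOn_id.mul
    apply ContinuousOn.rpow_const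
    · exact continuousOn_const.sub (Real.continuousOn_log.mono (fun x hx => by
        simp only [mem_compl_iff, mem_singleton_iff]; exact hx.1.ne'))
    · intro x hx
      have hb0 : (0 : ℝ) < 1 - Real.log x := by
        have := Real.log_nonpos hx.1.le hx.2; linarith
      left; exact hb0.ne'
  · intro x hx
    have hb0 : (0 : ℝ) < 1 - Real.log x := by
      have := Real.log_nonpos hx.1.le hx.2; linarith
    have := Real.rpow_pos_of_pos hb0 (1 + ε)
    have := hx.1
    positivity

lemma resW_mul_self_le {ε x : ℝ} (hε : 0 ≤ ε) (hx : 0 < x) (hx1 : x ≤ 1) :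
    x * resW ε x ≤ 1 := by
  have hb1 : (1 : ℝ) ≤ 1 - Real.log x := by
    have := Real.log_nonpos hx.le hx1; linarith
  have hb : (1 : ℝ) ≤ (1 - Real.log x) ^ (1 + ε) :=
    Real.one_le_rpow hb1 (by linarith)
  rw [resW, mul_one_div, div_le_one (by positivity)]
  nlinarith

theorem residue_function_index_one_limit (G : ℝ → ℝ)
    (hG : ContDiffOn ℝ 1 G (Icc 0 1)) (hG1 : G 1 = 0) :
    Tendsto (fun ε : ℝ => ε * ∫ x in Ioc (0:ℝ) 1,
        G x / (x * (Real.log (Real.exp 1 / x)) ^ (1 + ε)))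
      (𝓝[>] 0) (𝓝 (G 0)) := by
  -- Lipschitz-type bound
  obtain ⟨C, hC⟩ := isCompact_Icc.exists_bound_of_continuousOn
    (hG.continuousOn_derivWithin (uniqueDiffOn_Icc one_pos) le_rfl)
  set K : ℝ := max C 0 with hK_def
  have hK0 : 0 ≤ K := le_max_right _ _
  have hGK : ∀ x ∈ Icc (0:ℝ) 1, |G x - G 0| ≤ K * x := by
    intro x hx
    have := Convex.norm_image_sub_le_of_norm_derivWithin_le (C := K)
      (hG.differentiableOn one_ne_zero)
      (fun y hy => (hC y hy).trans (le_max_left _ _)) (convex_Icc 0 1)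
      (left_mem_Icc.2 zero_le_one) hx
    simpa [Real.norm_eq_abs, abs_of_nonneg hx.1] using this
  have hGb : ∀ x ∈ Icc (0:ℝ) 1, |G x| ≤ |G 0| + K := by
    intro x hx
    have h1 := hGK x hx
    have h2 : K * x ≤ K := by nlinarith [hx.1, hx.2]
    have := abs_sub_abs_le_abs_sub (G x) (G 0)
    linarith
  have key : ∀ ε : ℝ, 0 < ε →
      |ε * (∫ x in Ioc (0:ℝ) 1, G x / (x * (Real.log (Real.exp 1 / x)) ^ (1 + ε))) - G 0|
        ≤ K * ε := by
    intro ε hε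
    -- rewrite the integrand
    have hrw : (∫ x in Ioc (0:ℝ) 1, G x / (x * (Real.log (Real.exp 1 / x)) ^ (1 + ε)))
        = ∫ x in Ioc (0:ℝ) 1, G x * resW ε x := by
      apply setIntegral_congr_fun measurableSet_Ioc
      intro x hx
      dsimp only
      rw [Real.log_div (Real.exp_ne_zero 1) hx.1.ne', Real.log_exp, resW, mul_one_div,
        div_eq_mul_one_div, mul_one_div]
    have hint : IntegrableOn (fun x => G x * resW ε x) (Ioc (0:ℝ) 1) := by
      apply Integrable.mono' ((resW_integrableOn hε).const_mul (|G 0| + K))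
      · exact ((hG.continuousOn.mono Ioc_subset_Icc_self).mul resW_contOn').aestronglyMeasurable
          measurableSet_Ioc
      · rw [ae_restrict_iff' measurableSet_Ioc]
        apply Eventually.of_forall
        intro x hx
        have h0 := resW_nonneg (ε := ε) hx.1 hx.2
        rw [Real.norm_eq_abs, abs_mul, abs_of_nonneg h0]
        exact mul_le_mul_of_nonneg_right (hGb x (Ioc_subset_Icc_self hx)) h0
    have hint0 : IntegrableOn (fun x => G 0 * resW ε x) (Ioc (0:ℝ) 1) :=
      (resW_integrableOn hε).const_mul _
    have hR : ‖∫ x in Ioc (0:ℝ) 1, (G x * resW ε x - G 0 * resW ε x)‖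
        ≤ K * (volume (Ioc (0:ℝ) 1)).toReal := by
      apply norm_setIntegral_le_of_norm_le_const_ae' _
      · apply Eventually.of_forall
        intro x hx
        have h0 := resW_nonneg (ε := ε) hx.1 hx.2
        rw [← sub_mul, Real.norm_eq_abs, abs_mul, abs_of_nonneg h0]
        calc |G x - G 0| * resW ε x ≤ (K * x) * resW ε x :=
              mul_le_mul_of_nonneg_right (hGK x (Ioc_subset_Icc_self hx)) h0
          _ = K * (x * resW ε x) := by ring
          _ ≤ K * 1 := mul_le_mul_of_nonneg_left (resW_mul_self_le hε.le hx.1 hx.2) hK0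
          _ = K := mul_one K
      · rw [Real.volume_Ioc]
        exact ENNReal.ofReal_lt_top
    rw [Real.volume_Ioc] at hR
    simp only [sub_zero, ENNReal.toReal_ofReal zero_le_one, mul_one] at hR
    rw [integral_sub hint hint0, integral_const_mul, resW_integral hε] at hR
    rw [hrw]
    have hεne : ε ≠ 0 := hε.ne'
    have : ε * (∫ x in Ioc (0:ℝ) 1, G x * resW ε x) - G 0
        = ε * ((∫ x in Ioc (0:ℝ) 1, G x * resW ε x) - G 0 * (1 / ε)) := by
      field_simp
    rw [this, abs_mul, abs_of_pos hε, mul_comm K ε]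
    exact mul_le_mul_of_nonneg_left (by rwa [Real.norm_eq_abs] at hR) hε.le
  rw [← tendsto_sub_nhds_zero_iff]
  apply squeeze_zero_norm' (a := fun ε => K * ε)
  · filter_upwards [self_mem_nhdsWithin] with ε hε
    exact key ε hε
  · have : Tendsto (fun ε : ℝ => K * ε) (𝓝 0) (𝓝 (K * 0)) :=
      (continuous_const.mul continuous_id).tendsto 0
    simpa using this.mono_left nhdsWithin_le_nhds
end

section
/- Let G : [0,1]² → ℝ be a C² function, compactly supported in [0,1)², i.e. G vanishes in a neighborhood of {x₁ = 1} ∪ {x₂ = 1}. Then lim_{ε→0⁺} ε ∫₀¹∫₀¹ G(x₁,x₂) / (x₁ x₂ (log(e²/(x₁x₂)))^{2+ε}) dx₁ dx₂ = G(0,0). -/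
open MeasureTheory Filter Topology Real Set

private lemma expNeg_image : (fun t : ℝ => Real.exp (-t)) '' Ioi 0 = Ioo (0:ℝ) 1 := by
  ext y
  constructor
  · rintro ⟨t, ht, rfl⟩
    have ht' : (0:ℝ) < t := ht
    exact ⟨Real.exp_pos _, by rw [Real.exp_lt_one_iff]; linarith⟩
  · rintro ⟨hy0, hy1⟩
    exact ⟨-Real.log y, by simpa using Real.log_neg hy0 hy1, by simp [Real.exp_log hy0]⟩

private lemma key (c p : ℝ) (hc : 0 < c) (hp : 0 < p) :
    IntegrableOn (fun y => 1/(y * (c - Real.log y) ^ (p+1))) (Ioc (0:ℝ) 1) ∧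
    ∫ y in Ioc (0:ℝ) 1, 1/(y * (c - Real.log y) ^ (p+1)) = c ^ (-p) / p := by
  set g : ℝ → ℝ := fun t => (c + t) ^ (-(p+1)) with hg
  set Φ : ℝ → ℝ := fun t => -((c + t) ^ (-p)) / p with hΦ
  have hderiv : ∀ t ∈ Ici (0:ℝ), HasDerivAt Φ (g t) t := by
    intro t ht
    have hct : 0 < c + t := by have := mem_Ici.mp ht; linarith
    have h1 : HasDerivAt (fun s : ℝ => c + s) 1 t := (hasDerivAt_id t).const_add c
    have h2 : HasDerivAt (fun s : ℝ => s ^ (-p)) (-p * (c+t) ^ (-p - 1)) (c + t) :=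
      Real.hasDerivAt_rpow_const (Or.inl hct.ne')
    have h3 := h2.comp t h1
    have h4 := h3.neg.div_const p
    refine h4.congr_deriv ?_
    symm
    rw [hg]
    have : -(p+1) = -p - 1 := by ring
    rw [this]
    field_simp
  have htend : Tendsto Φ atTop (𝓝 0) := by
    have h0 : Tendsto (fun t : ℝ => c + t) atTop atTop :=
      tendsto_atTop_add_const_left _ c tendsto_id
    have h1 : Tendsto (fun t : ℝ => (c + t) ^ (-p)) atTop (𝓝 0) :=
      (tendsto_rpow_neg_atTop hp).comp h0
    have := h1.neg.div_const p
    simpa using this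
  have hgnn : ∀ t ∈ Ioi (0:ℝ), 0 ≤ g t := by
    intro t ht
    exact Real.rpow_nonneg (by have : (0:ℝ) < t := ht; linarith) _
  have hint : IntegrableOn g (Ioi 0) :=
    integrableOn_Ioi_deriv_of_nonneg' hderiv hgnn htend
  have hval : ∫ t in Ioi (0:ℝ), g t = 0 - Φ 0 :=
    integral_Ioi_of_hasDerivAt_of_tendsto' hderiv hint htend
  have hΦ0 : Φ 0 = -(c ^ (-p)) / p := by simp [hΦ]
  -- substitution
  set f : ℝ → ℝ := fun t => Real.exp (-t) with hf
  set f' : ℝ → ℝ := fun t => -Real.exp (-t) with hf'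
  have hfderiv : ∀ t ∈ Ioi (0:ℝ), HasDerivWithinAt f (f' t) (Ioi 0) t := by
    intro t _
    have h1 : HasDerivAt (fun s : ℝ => -s) (-1) t := (hasDerivAt_id t).neg
    have h2 := (Real.hasDerivAt_exp (-t)).comp t h1
    have : Real.exp (-t) * (-1) = f' t := by simp [hf']
    rw [this] at h2
    exact h2.hasDerivWithinAt
  have hinj : InjOn f (Ioi 0) := by
    intro a _ b _ h
    have := Real.exp_injective h
    linarith [neg_injective this]
  set F : ℝ → ℝ := fun y => 1/(y * (c - Real.log y) ^ (p+1)) with hF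
  have heq : ∀ t ∈ Ioi (0:ℝ), |f' t| • F (f t) = g t := by
    intro t ht
    have ht' : (0:ℝ) < t := ht
    have hct : 0 < c + t := by linarith
    have h1 : |f' t| = Real.exp (-t) := by
      rw [hf']; rw [abs_neg, abs_of_pos (Real.exp_pos _)]
    have h2 : F (f t) = 1/(Real.exp (-t) * (c + t) ^ (p+1)) := by
      simp only [hF, hf, Real.log_exp]
      ring_nf
    rw [smul_eq_mul, h1, h2]
    show Real.exp (-t) * (1 / (Real.exp (-t) * (c + t) ^ (p + 1))) = (c + t) ^ (-(p+1))
    rw [Real.rpow_neg hct.le]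
    have hA : (c + t) ^ (p+1) ≠ 0 := (Real.rpow_pos_of_pos hct _).ne'
    field_simp
  have himage := expNeg_image
  have hioo_int : IntegrableOn F (Ioo (0:ℝ) 1) := by
    rw [← himage,
      integrableOn_image_iff_integrableOn_abs_deriv_smul measurableSet_Ioi hfderiv hinj]
    exact hint.congr_fun (fun t ht => (heq t ht).symm) measurableSet_Ioi
  have hioo_val : ∫ y in Ioo (0:ℝ) 1, F y = c ^ (-p) / p := by
    rw [← himage,
      integral_image_eq_integral_abs_deriv_smul measurableSet_Ioi hfderiv hinj]
    rw [setIntegral_congr_fun measurableSet_Ioi heq, hval, hΦ0]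
    ring
  constructor
  · rw [integrableOn_Ioc_iff_integrableOn_Ioo]; exact hioo_int
  · rw [integral_Ioc_eq_integral_Ioo]; exact hioo_val

private lemma inner_step (G : ℝ × ℝ → ℝ) (hGc : Continuous G) (B C ε x : ℝ) (hε : 0 < ε)
    (hx : x ∈ Ioc (0:ℝ) 1)
    (hB : ∀ z : ℝ × ℝ, z ∈ (Icc 0 1 ×ˢ Icc 0 1 : Set (ℝ × ℝ)) → |G z| ≤ B)
    (hC0 : 0 ≤ C)
    (hC : ∀ a b : ℝ, a ∈ Icc (0:ℝ) 1 → b ∈ Icc (0:ℝ) 1 → |G (a, b) - G (0, 0)| ≤ C * (a + b)) :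
    (∫ y in Ioc (0:ℝ) 1, G (x, y) / (x * y * (Real.log (Real.exp 2 / (x * y))) ^ (2 + ε)))
      = G (0, 0) * ((1/x) * ((2 - Real.log x) ^ (-(1+ε)) / (1+ε)))
        + (∫ y in Ioc (0:ℝ) 1, (G (x, y) - G (0, 0)) *
            ((1/x) * (1/(y * ((2 - Real.log x) - Real.log y) ^ ((1+ε)+1)))))
    ∧ |∫ y in Ioc (0:ℝ) 1, (G (x, y) - G (0, 0)) *
            ((1/x) * (1/(y * ((2 - Real.log x) - Real.log y) ^ ((1+ε)+1))))|
        ≤ C * (1/2 + 1/(x * (2 - Real.log x) ^ ((1:ℝ)+1))) := by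
  obtain ⟨hx0, hx1⟩ := hx
  have hlx : Real.log x ≤ 0 := Real.log_nonpos hx0.le hx1
  have hcx : (0:ℝ) < 2 - Real.log x := by linarith
  have key1 := key (2 - Real.log x) (1 + ε) hcx (by linarith)
  set w : ℝ → ℝ := fun y => 1/(y * ((2 - Real.log x) - Real.log y) ^ ((1+ε)+1)) with hw
  have hyfacts : ∀ y ∈ Ioc (0:ℝ) 1, 0 < y ∧ Real.log y ≤ 0 ∧
      (0:ℝ) < (2 - Real.log x) - Real.log y := by
    intro y hy
    have h1 := Real.log_nonpos hy.1.le hy.2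
    exact ⟨hy.1, h1, by linarith⟩
  have hwpos : ∀ y ∈ Ioc (0:ℝ) 1, 0 < w y := by
    intro y hy
    obtain ⟨h1, h2, h3⟩ := hyfacts y hy
    have h4 := Real.rpow_pos_of_pos h3 ((1+ε)+1)
    rw [hw]
    positivity
  have hwmeas : Measurable w := by
    have h1 : Measurable fun y : ℝ => (y * ((2 - Real.log x) - Real.log y) ^ ((1+ε)+1)) :=
      measurable_id.mul ((Real.continuous_rpow_const (by positivity)).measurable.comp
        (measurable_const.sub Real.measurable_log))
    exact measurable_const.div h1
  have hw_int : IntegrableOn w (Ioc (0:ℝ) 1) := key1.1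
  have hxw_int : IntegrableOn (fun y => (1/x) * w y) (Ioc (0:ℝ) 1) := hw_int.const_mul _
  have hGmeas : AEStronglyMeasurable (fun y => G (x, y) * ((1/x) * w y))
      (volume.restrict (Ioc (0:ℝ) 1)) :=
    ((hGc.comp (Continuous.prodMk_right x)).measurable.mul
      (measurable_const.mul hwmeas)).aestronglyMeasurable
  have hGw_int : IntegrableOn (fun y => G (x, y) * ((1/x) * w y)) (Ioc (0:ℝ) 1) := by
    apply Integrable.mono' (hxw_int.const_mul B) hGmeas
    filter_upwards [ae_restrict_mem measurableSet_Ioc] with y hy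
    have h0 : 0 ≤ (1/x) * w y := mul_nonneg (by positivity) (hwpos y hy).le
    rw [Real.norm_eq_abs, abs_mul, abs_of_nonneg h0]
    exact mul_le_mul_of_nonneg_right (hB (x, y) ⟨⟨hx0.le, hx1⟩, ⟨hy.1.le, hy.2⟩⟩) h0
  have hG00w_int : IntegrableOn (fun y => G (0, 0) * ((1/x) * w y)) (Ioc (0:ℝ) 1) :=
    hxw_int.const_mul _
  have hdiff_int : IntegrableOn
      (fun y => (G (x, y) - G (0, 0)) * ((1/x) * w y)) (Ioc (0:ℝ) 1) := by
    have := hGw_int.sub hG00w_int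
    simpa [sub_mul, Pi.sub_def] using this
  constructor
  · have hsplit : (∫ y in Ioc (0:ℝ) 1, G (x, y) / (x * y *
        (Real.log (Real.exp 2 / (x * y))) ^ (2 + ε)))
        = ∫ y in Ioc (0:ℝ) 1, G (x, y) * ((1/x) * w y) := by
      apply setIntegral_congr_fun measurableSet_Ioc
      intro y hy
      have hxy : 0 < x * y := mul_pos hx0 hy.1
      have hlogeq : Real.log (Real.exp 2 / (x * y)) = (2 - Real.log x) - Real.log y := by
        rw [Real.log_div (Real.exp_ne_zero 2) hxy.ne', Real.log_exp,
          Real.log_mul hx0.ne' hy.1.ne']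
        ring
      simp only [hw]
      rw [hlogeq, show (2:ℝ) + ε = (1+ε)+1 by ring, div_eq_mul_one_div]
      congr 1
      rw [one_div, one_div, one_div, mul_assoc, mul_inv]
    rw [hsplit]
    have heq2 : (fun y => G (x, y) * ((1/x) * w y))
        = fun y => (G (x, y) - G (0, 0)) * ((1/x) * w y) + G (0, 0) * ((1/x) * w y) := by
      funext y; ring
    rw [heq2, integral_add hdiff_int hG00w_int, integral_const_mul, integral_const_mul,
      key1.2, add_comm]
  · have key3 := key 2 1 (by norm_num) one_pos
    have hconst_int : IntegrableOn
        (fun _ : ℝ => 1/(x * (2 - Real.log x) ^ ((1:ℝ)+1))) (Ioc (0:ℝ) 1) := by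
      refine (integrableOn_const_iff).mpr ?_
      right
      exact measure_Ioc_lt_top
    have hmaj_int : IntegrableOn (fun y => C * (1/(y * (2 - Real.log y) ^ ((1:ℝ)+1))
        + 1/(x * (2 - Real.log x) ^ ((1:ℝ)+1)))) (Ioc (0:ℝ) 1) :=
      (key3.1.add hconst_int).const_mul C
    have habs : ∀ᵐ y ∂(volume.restrict (Ioc (0:ℝ) 1)),
        ‖(G (x, y) - G (0, 0)) * ((1/x) * w y)‖
          ≤ C * (1/(y * (2 - Real.log y) ^ ((1:ℝ)+1)) + 1/(x * (2 - Real.log x) ^ ((1:ℝ)+1))) := by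
      filter_upwards [ae_restrict_mem measurableSet_Ioc] with y hy
      obtain ⟨hy0, hly, hA0⟩ := hyfacts y hy
      have hA : 0 < ((2 - Real.log x) - Real.log y) ^ ((1+ε)+1) :=
        Real.rpow_pos_of_pos hA0 _
      have h2y : (0:ℝ) < 2 - Real.log y := by linarith
      have e1 : (2 - Real.log y) ^ ((1:ℝ)+1) ≤ ((2 - Real.log x) - Real.log y) ^ ((1+ε)+1) :=
        le_trans (Real.rpow_le_rpow_of_exponent_le (by linarith) (by linarith))
          (Real.rpow_le_rpow (by linarith) (by linarith) (by linarith))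
      have e2 : (2 - Real.log x) ^ ((1:ℝ)+1) ≤ ((2 - Real.log x) - Real.log y) ^ ((1+ε)+1) :=
        le_trans (Real.rpow_le_rpow_of_exponent_le (by linarith) (by linarith))
          (Real.rpow_le_rpow (by linarith) (by linarith) (by linarith))
      have h0 : 0 ≤ (1/x) * w y := mul_nonneg (by positivity) (hwpos y hy).le
      rw [Real.norm_eq_abs, abs_mul, abs_of_nonneg h0]
      have step1 : |G (x, y) - G (0, 0)| * ((1/x) * w y) ≤ (C * (x + y)) * ((1/x) * w y) :=
        mul_le_mul_of_nonneg_right (hC x y ⟨hx0.le, hx1⟩ ⟨hy0.le, hy.2⟩) h0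
      refine step1.trans ?_
      have step2 : (x + y) * ((1/x) * w y)
          = 1/(y * ((2 - Real.log x) - Real.log y) ^ ((1+ε)+1))
            + 1/(x * ((2 - Real.log x) - Real.log y) ^ ((1+ε)+1)) := by
        rw [hw]
        field_simp
      have step3 : 1/(y * ((2 - Real.log x) - Real.log y) ^ ((1+ε)+1))
          ≤ 1/(y * (2 - Real.log y) ^ ((1:ℝ)+1)) :=
        one_div_le_one_div_of_le (by positivity) (mul_le_mul_of_nonneg_left e1 hy0.le)
      have step4 : 1/(x * ((2 - Real.log x) - Real.log y) ^ ((1+ε)+1))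
          ≤ 1/(x * (2 - Real.log x) ^ ((1:ℝ)+1)) :=
        one_div_le_one_div_of_le (by positivity) (mul_le_mul_of_nonneg_left e2 hx0.le)
      calc (C * (x + y)) * ((1/x) * w y) = C * ((x + y) * ((1/x) * w y)) := by ring
        _ = C * (1/(y * ((2 - Real.log x) - Real.log y) ^ ((1+ε)+1))
              + 1/(x * ((2 - Real.log x) - Real.log y) ^ ((1+ε)+1))) := by rw [step2]
        _ ≤ C * (1/(y * (2 - Real.log y) ^ ((1:ℝ)+1))
              + 1/(x * (2 - Real.log x) ^ ((1:ℝ)+1))) :=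
            mul_le_mul_of_nonneg_left (add_le_add step3 step4) hC0
    have hbnd := norm_integral_le_of_norm_le hmaj_int habs
    rw [Real.norm_eq_abs] at hbnd
    refine hbnd.trans ?_
    rw [integral_const_mul, integral_add key3.1 hconst_int, key3.2, setIntegral_const]
    have hvol : (volume (Ioc (0:ℝ) 1)).toReal = 1 := by
      rw [Real.volume_Ioc]
      norm_num
    rw [measureReal_def, hvol, Real.rpow_neg_one]
    norm_num

private lemma main_est (G : ℝ × ℝ → ℝ) (hGc : Continuous G) (B C ε : ℝ) (hε : 0 < ε)
    (hB : ∀ z : ℝ × ℝ, z ∈ (Icc 0 1 ×ˢ Icc 0 1 : Set (ℝ × ℝ)) → |G z| ≤ B)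
    (hC0 : 0 ≤ C)
    (hC : ∀ a b : ℝ, a ∈ Icc (0:ℝ) 1 → b ∈ Icc (0:ℝ) 1 → |G (a, b) - G (0, 0)| ≤ C * (a + b)) :
    |(∫ x in Ioc (0:ℝ) 1, ∫ y in Ioc (0:ℝ) 1,
        G (x, y) / (x * y * (Real.log (Real.exp 2 / (x * y))) ^ (2 + ε)))
      - G (0, 0) * ((1/(1+ε)) * ((2:ℝ) ^ (-ε) / ε))| ≤ C := by
  have h1ε : (0:ℝ) < 1 + ε := by linarith
  have key2 := key 2 ε (by norm_num) hε
  have key3 := key 2 1 (by norm_num) one_pos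
  set A : ℝ → ℝ := fun x => (1/x) * ((2 - Real.log x) ^ (-(1+ε)) / (1+ε)) with hA
  set r : ℝ → ℝ := fun x => ∫ y in Ioc (0:ℝ) 1, (G (x, y) - G (0, 0)) *
      ((1/x) * (1/(y * ((2 - Real.log x) - Real.log y) ^ ((1+ε)+1)))) with hr
  have hxfacts : ∀ x ∈ Ioc (0:ℝ) 1, 0 < x ∧ Real.log x ≤ 0 ∧ (0:ℝ) < 2 - Real.log x := by
    intro x hx
    have := Real.log_nonpos hx.1.le hx.2
    exact ⟨hx.1, this, by linarith⟩
  have hEqOn : EqOn (fun x => (1/(1+ε)) * (1/(x * (2 - Real.log x) ^ (ε+1)))) A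
      (Ioc (0:ℝ) 1) := by
    intro x hx
    obtain ⟨hx0, hlx, hcx⟩ := hxfacts x hx
    have hP : (0:ℝ) < (2 - Real.log x) ^ (ε+1) := Real.rpow_pos_of_pos hcx _
    have h1 : (2 - Real.log x) ^ (-(1+ε)) = ((2 - Real.log x) ^ (ε+1))⁻¹ := by
      rw [show -(1+ε) = -(ε+1) by ring, Real.rpow_neg hcx.le]
    simp only [hA, h1]
    field_simp
  have hA_int : IntegrableOn A (Ioc (0:ℝ) 1) :=
    IntegrableOn.congr_fun (key2.1.const_mul (1/(1+ε))) hEqOn measurableSet_Ioc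
  have hA_val : ∫ x in Ioc (0:ℝ) 1, A x = (1/(1+ε)) * ((2:ℝ) ^ (-ε) / ε) := by
    rw [← setIntegral_congr_fun measurableSet_Ioc hEqOn, integral_const_mul, key2.2]
  -- measurability of r
  have hmeasH : Measurable (fun z : ℝ × ℝ => (G z - G (0, 0)) *
      ((1/z.1) * (1/(z.2 * ((2 - Real.log z.1) - Real.log z.2) ^ ((1+ε)+1))))) := by
    have m0 : Measurable fun z : ℝ × ℝ => G z - G (0, 0) :=
      hGc.measurable.sub measurable_const
    have m1 : Measurable fun z : ℝ × ℝ => 1/z.1 := by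
      exact measurable_const.div measurable_fst
    have m2 : Measurable fun z : ℝ × ℝ =>
        z.2 * ((2 - Real.log z.1) - Real.log z.2) ^ ((1+ε)+1) :=
      measurable_snd.mul ((Real.continuous_rpow_const (by positivity)).measurable.comp
        ((measurable_const.sub (Real.measurable_log.comp measurable_fst)).sub
          (Real.measurable_log.comp measurable_snd)))
    have m3 : Measurable fun z : ℝ × ℝ =>
        1/(z.2 * ((2 - Real.log z.1) - Real.log z.2) ^ ((1+ε)+1)) := by
      exact measurable_const.div m2
    exact m0.mul (m1.mul m3)
  have hr_meas : AEStronglyMeasurable r (volume.restrict (Ioc (0:ℝ) 1)) := by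
    have := (hmeasH.aestronglyMeasurable
      (μ := (volume.restrict (Ioc (0:ℝ) 1)).prod (volume.restrict (Ioc (0:ℝ) 1)))).integral_prod_right'
    exact this
  -- majorant for r
  have hconst_int : IntegrableOn (fun _ : ℝ => (1:ℝ)/2) (Ioc (0:ℝ) 1) :=
    (integrableOn_const_iff).mpr (Or.inr measure_Ioc_lt_top)
  have hmaj_int : IntegrableOn
      (fun x => C * (1/2 + 1/(x * (2 - Real.log x) ^ ((1:ℝ)+1)))) (Ioc (0:ℝ) 1) :=
    (hconst_int.add key3.1).const_mul C
  have hr_bound : ∀ᵐ x ∂(volume.restrict (Ioc (0:ℝ) 1)),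
      ‖r x‖ ≤ C * (1/2 + 1/(x * (2 - Real.log x) ^ ((1:ℝ)+1))) := by
    filter_upwards [ae_restrict_mem measurableSet_Ioc] with x hx
    rw [Real.norm_eq_abs]
    exact (inner_step G hGc B C ε x hε hx hB hC0 hC).2
  have hr_int : IntegrableOn r (Ioc (0:ℝ) 1) :=
    Integrable.mono' hmaj_int hr_meas hr_bound
  -- outer congruence
  have houter : (∫ x in Ioc (0:ℝ) 1, ∫ y in Ioc (0:ℝ) 1,
      G (x, y) / (x * y * (Real.log (Real.exp 2 / (x * y))) ^ (2 + ε)))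
      = ∫ x in Ioc (0:ℝ) 1, (G (0, 0) * A x + r x) := by
    apply setIntegral_congr_fun measurableSet_Ioc
    intro x hx
    exact (inner_step G hGc B C ε x hε hx hB hC0 hC).1
  rw [houter, integral_add (hA_int.const_mul _) hr_int, integral_const_mul, hA_val]
  have hrint_bound : |∫ x in Ioc (0:ℝ) 1, r x| ≤ C := by
    have hbnd := norm_integral_le_of_norm_le hmaj_int hr_bound
    rw [Real.norm_eq_abs] at hbnd
    refine hbnd.trans ?_
    rw [integral_const_mul, integral_add hconst_int key3.1, key3.2, setIntegral_const]
    have hvol : (volume (Ioc (0:ℝ) 1)).toReal = 1 := by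
      rw [Real.volume_Ioc]; norm_num
    rw [measureReal_def, hvol, Real.rpow_neg_one]
    norm_num
  calc |G (0, 0) * ((1/(1+ε)) * ((2:ℝ) ^ (-ε) / ε)) + (∫ x in Ioc (0:ℝ) 1, r x)
      - G (0, 0) * ((1/(1+ε)) * ((2:ℝ) ^ (-ε) / ε))| = |∫ x in Ioc (0:ℝ) 1, r x| := by
        congr 1; ring
    _ ≤ C := hrint_bound

theorem residue_function_two_dim_limit (G : ℝ × ℝ → ℝ) (hG : ContDiff ℝ 2 G)
    (hsupp : ∃ a : ℝ, a < 1 ∧ ∀ x : ℝ × ℝ, (a ≤ x.1 ∨ a ≤ x.2) → G x = 0) :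
    Tendsto (fun ε : ℝ => ε * ∫ x in Ioc (0:ℝ) 1, ∫ y in Ioc (0:ℝ) 1,
        G (x, y) / (x * y * (Real.log (Real.exp 2 / (x * y))) ^ (2 + ε)))
      (𝓝[>] 0) (𝓝 (G (0, 0))) := by
  have hGc : Continuous G := hG.continuous
  -- bound on |G|
  have hKc : IsCompact (Icc 0 1 ×ˢ Icc 0 1 : Set (ℝ × ℝ)) := isCompact_Icc.prod isCompact_Icc
  obtain ⟨B, hB'⟩ := hKc.exists_bound_of_continuousOn hGc.continuousOn
  have hB : ∀ z : ℝ × ℝ, z ∈ (Icc 0 1 ×ˢ Icc 0 1 : Set (ℝ × ℝ)) → |G z| ≤ B := by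
    intro z hz
    simpa [Real.norm_eq_abs] using hB' z hz
  -- Lipschitz-type bound
  obtain ⟨C, hC0, hC⟩ : ∃ C : ℝ, 0 ≤ C ∧ ∀ a b : ℝ, a ∈ Icc (0:ℝ) 1 → b ∈ Icc (0:ℝ) 1 →
      |G (a, b) - G (0, 0)| ≤ C * (a + b) := by
    have hKconv : Convex ℝ (Icc 0 1 ×ˢ Icc 0 1 : Set (ℝ × ℝ)) :=
      (convex_Icc _ _).prod (convex_Icc _ _)
    have hcont : ContinuousOn (fderiv ℝ G) (Icc 0 1 ×ˢ Icc 0 1 : Set (ℝ × ℝ)) :=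
      (hG.continuous_fderiv (by norm_num)).continuousOn
    obtain ⟨C, hCb⟩ := hKc.exists_bound_of_continuousOn hcont
    refine ⟨max C 0, le_max_right _ _, ?_⟩
    intro a b ha hb
    have h1 : ((a, b) : ℝ × ℝ) ∈ (Icc 0 1 ×ˢ Icc 0 1 : Set (ℝ × ℝ)) := ⟨ha, hb⟩
    have h2 : ((0:ℝ), (0:ℝ)) ∈ (Icc 0 1 ×ˢ Icc 0 1 : Set (ℝ × ℝ)) :=
      ⟨⟨le_refl 0, zero_le_one⟩, ⟨le_refl 0, zero_le_one⟩⟩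
    have hdiff : ∀ z ∈ (Icc 0 1 ×ˢ Icc 0 1 : Set (ℝ × ℝ)), DifferentiableAt ℝ G z := fun z _ =>
      (hG.differentiable (by norm_num)).differentiableAt
    have hbound : ∀ z ∈ (Icc 0 1 ×ˢ Icc 0 1 : Set (ℝ × ℝ)), ‖fderiv ℝ G z‖ ≤ max C 0 :=
      fun z hz => (hCb z hz).trans (le_max_left _ _)
    have hkey := hKconv.norm_image_sub_le_of_norm_fderiv_le hdiff hbound h2 h1
    have hnorm : ‖((a, b) : ℝ × ℝ) - (0, 0)‖ ≤ a + b := by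
      rw [show ((a, b) : ℝ × ℝ) - (0, 0) = (a, b) by simp, Prod.norm_def]
      simp only [Real.norm_eq_abs]
      rw [abs_of_nonneg ha.1, abs_of_nonneg hb.1]
      exact max_le (by linarith [hb.1]) (by linarith [ha.1])
    calc |G (a, b) - G (0, 0)| ≤ max C 0 * ‖((a, b) : ℝ × ℝ) - (0, 0)‖ := hkey
      _ ≤ max C 0 * (a + b) := mul_le_mul_of_nonneg_left hnorm (le_max_right _ _)
  have main : ∀ ε : ℝ, 0 < ε →
      |(∫ x in Ioc (0:ℝ) 1, ∫ y in Ioc (0:ℝ) 1,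
          G (x, y) / (x * y * (Real.log (Real.exp 2 / (x * y))) ^ (2 + ε)))
        - G (0, 0) * ((1/(1+ε)) * ((2:ℝ) ^ (-ε) / ε))| ≤ C :=
    fun ε hε => main_est G hGc B C ε hε hB hC0 hC
  set φ : ℝ → ℝ := fun ε => G (0, 0) * ((2:ℝ) ^ (-ε) / (1 + ε)) with hφdef
  set F : ℝ → ℝ := fun ε => ε * ∫ x in Ioc (0:ℝ) 1, ∫ y in Ioc (0:ℝ) 1,
      G (x, y) / (x * y * (Real.log (Real.exp 2 / (x * y))) ^ (2 + ε)) with hFdef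
  have hφto : Tendsto φ (𝓝[>] 0) (𝓝 (G (0, 0))) := by
    have hrw : φ = fun ε : ℝ => G (0, 0) * (Real.exp (Real.log 2 * (-ε)) / (1 + ε)) := by
      funext ε
      simp only [hφdef]
      rw [Real.rpow_def_of_pos (by norm_num : (0:ℝ) < 2)]
    rw [hrw]
    have hcont : ContinuousAt (fun ε : ℝ => G (0, 0) * (Real.exp (Real.log 2 * (-ε)) / (1 + ε)))
        0 := by
      apply ContinuousAt.mul continuousAt_const
      apply ContinuousAt.div
      · exact (Real.continuous_exp.comp (continuous_const.mul continuous_neg)).continuousAt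
      · exact (continuous_const.add continuous_id).continuousAt
      · norm_num
    have h2 : Tendsto (fun ε : ℝ => G (0, 0) * (Real.exp (Real.log 2 * (-ε)) / (1 + ε)))
        (𝓝[>] 0) (𝓝 (G (0, 0) * (Real.exp (Real.log 2 * (-0)) / (1 + 0)))) :=
      hcont.tendsto.mono_left nhdsWithin_le_nhds
    simpa using h2
  have hdiffto : Tendsto (fun ε => F ε - φ ε) (𝓝[>] 0) (𝓝 0) := by
    apply squeeze_zero_norm' (a := fun ε => C * ε)
    · filter_upwards [self_mem_nhdsWithin] with ε hε
      have hε' : (0:ℝ) < ε := hε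
      have h1 := main ε hε'
      have hid : ε * (G (0, 0) * ((1/(1+ε)) * ((2:ℝ) ^ (-ε) / ε))) = φ ε := by
        rw [hφdef]
        field_simp
      have : ‖F ε - φ ε‖ = ε * |(∫ x in Ioc (0:ℝ) 1, ∫ y in Ioc (0:ℝ) 1,
          G (x, y) / (x * y * (Real.log (Real.exp 2 / (x * y))) ^ (2 + ε)))
          - G (0, 0) * ((1/(1+ε)) * ((2:ℝ) ^ (-ε) / ε))| := by
        rw [hFdef, ← hid, Real.norm_eq_abs, ← mul_sub, abs_mul, abs_of_pos hε']
      rw [this, mul_comm C ε]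
      exact mul_le_mul_of_nonneg_left h1 hε'.le
    · have h2 : Tendsto (fun ε : ℝ => C * ε) (𝓝 0) (𝓝 (C * 0)) :=
        (continuous_const.mul continuous_id).tendsto 0
      simpa using h2.mono_left nhdsWithin_le_nhds
  have := hφto.add hdiffto
  simp only [add_zero] at this
  have heq : (fun ε => φ ε + (F ε - φ ε)) = F := by
    funext ε; ring
  rw [heq] at this
  exact this
end

section
/- Let G ∈ C¹_c([0,1)). Then the function F(ε) := ε ∫₀¹ G(x)/(x (log(e/x))^{1+ε}) dx, initially defined for ε > 0, extends to an analytic function of ε on all of ℂ, given by ε ↦ − ∫₀¹ G'(x) (log(e/x))^{−ε} dx, and F(0) = G(0). -/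
open MeasureTheory Filter Topology Real Set

private lemma L_ge_one {x : ℝ} (h0 : 0 < x) (h1 : x ≤ 1) : 1 ≤ 1 - Real.log x := by
  have := Real.log_nonpos h0.le h1
  linarith

private lemma log_e_div {x : ℝ} (hx : 0 < x) :
    Real.log (Real.exp 1 / x) = 1 - Real.log x := by
  rw [Real.log_div (Real.exp_ne_zero 1) hx.ne', Real.log_exp]

private lemma pow_le_mul_rpow {x : ℝ} (n : ℕ) (h0 : 0 < x) (h1 : x ≤ 1) :
    (1 - Real.log x) ^ n ≤ (2 ^ n * n.factorial * Real.exp 1) * x ^ (-(1/2) : ℝ) := by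
  set y := 1 - Real.log x with hy
  have hy1 : 1 ≤ y := L_ge_one h0 h1
  have hy0 : (0:ℝ) ≤ y / 2 := by linarith
  have hsum : (y/2)^n / n.factorial ≤ Real.exp (y/2) := by
    calc (y/2)^n / n.factorial ≤ ∑ i ∈ Finset.range (n+1), (y/2)^i / i.factorial := by
          exact Finset.single_le_sum (f := fun i => (y/2)^i / i.factorial) (fun i _ => by positivity) (Finset.self_mem_range_succ n)
      _ ≤ Real.exp (y/2) := Real.sum_le_exp_of_nonneg hy0 _
  have hfac : (0:ℝ) < n.factorial := by positivity
  have h1' : (y/2)^n ≤ Real.exp (y/2) * n.factorial := (div_le_iff₀ hfac).1 hsum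
  have hexp : Real.exp (y/2) = Real.exp (1/2) * x ^ (-(1/2):ℝ) := by
    rw [Real.rpow_def_of_pos h0, ← Real.exp_add]
    congr 1
    rw [hy]; ring
  have hx0 : (0:ℝ) ≤ x ^ (-(1/2):ℝ) := Real.rpow_nonneg h0.le _
  have hee : Real.exp (1/2) ≤ Real.exp 1 := Real.exp_le_exp.2 (by norm_num)
  calc y ^ n = 2 ^ n * (y/2) ^ n := by rw [← mul_pow]; congr 1; ring
    _ ≤ 2 ^ n * (Real.exp (y/2) * n.factorial) := by
        apply mul_le_mul_of_nonneg_left h1' (by positivity)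
    _ = 2 ^ n * n.factorial * Real.exp (1/2) * x ^ (-(1/2):ℝ) := by rw [hexp]; ring
    _ ≤ 2 ^ n * n.factorial * Real.exp 1 * x ^ (-(1/2):ℝ) := by
        apply mul_le_mul_of_nonneg_right _ hx0
        apply mul_le_mul_of_nonneg_left hee (by positivity)

private lemma integrableOn_pow_L (n : ℕ) :
    IntegrableOn (fun x => (1 - Real.log x) ^ n) (Set.Ioc (0:ℝ) 1) := by
  have hrp : IntegrableOn (fun x : ℝ => x ^ (-(1/2) : ℝ)) (Set.Ioc (0:ℝ) 1) :=
    (intervalIntegral.intervalIntegrable_rpow' (by norm_num)).1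
  refine Integrable.mono' (hrp.const_mul (2 ^ n * n.factorial * Real.exp 1)) ?_ ?_
  · apply ContinuousOn.aestronglyMeasurable ?_ measurableSet_Ioc
    refine (continuousOn_const.sub (Real.continuousOn_log.mono ?_)).pow n
    intro x hx
    simp only [Set.mem_compl_iff, Set.mem_singleton_iff]
    exact hx.1.ne'
  · filter_upwards [ae_restrict_mem measurableSet_Ioc] with x hx
    have h1 : (1:ℝ) ≤ 1 - Real.log x := L_ge_one hx.1 hx.2
    rw [Real.norm_eq_abs, abs_of_nonneg (by positivity)]
    exact pow_le_mul_rpow n hx.1 hx.2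

private lemma part1 (G : ℝ → ℝ) (hG : ContDiff ℝ 1 G) :
    AnalyticOnNhd ℂ
        (fun ε : ℂ => - ∫ x in Ioc (0:ℝ) 1,
          ((deriv G x : ℝ) : ℂ) * ((Real.log (Real.exp 1 / x) : ℝ) : ℂ) ^ (-ε)) Set.univ := by
  have hderivG : Continuous (deriv G) := hG.continuous_deriv le_rfl
  obtain ⟨K, hK⟩ := (isCompact_Icc (a := (0:ℝ)) (b := 1)).exists_bound_of_continuousOn
    hderivG.continuousOn
  have hK0 : 0 ≤ K := le_trans (norm_nonneg _) (hK 0 ⟨le_rfl, zero_le_one⟩)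
  -- continuity of the complex base
  have hcb : ∀ x ∈ Ioc (0:ℝ) 1,
      ContinuousAt (fun t : ℝ => ((Real.log (Real.exp 1 / t) : ℝ) : ℂ)) x := by
    intro x hx
    apply Complex.continuous_ofReal.continuousAt.comp
    apply (Real.continuousAt_log (div_ne_zero (Real.exp_ne_zero 1) hx.1.ne')).comp
    exact continuousAt_const.div continuousAt_id hx.1.ne'
  have hLpos : ∀ x ∈ Ioc (0:ℝ) 1, 1 ≤ Real.log (Real.exp 1 / x) := by
    intro x hx; rw [log_e_div hx.1]; exact L_ge_one hx.1 hx.2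
  have haesm : ∀ ε : ℂ, AEStronglyMeasurable
      (fun x : ℝ => ((deriv G x : ℝ) : ℂ) * ((Real.log (Real.exp 1 / x) : ℝ) : ℂ) ^ (-ε))
      (volume.restrict (Ioc (0:ℝ) 1)) := by
    intro ε
    apply ContinuousOn.aestronglyMeasurable ?_ measurableSet_Ioc
    intro x hx
    apply ContinuousAt.continuousWithinAt
    apply ContinuousAt.mul
    · exact (Complex.continuous_ofReal.comp hderivG).continuousAt
    · apply ContinuousAt.cpow (hcb x hx) continuousAt_const
      left
      simp only [Complex.ofReal_re]
      linarith [hLpos x hx]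
  have key : ∀ ε₀ : ℂ, DifferentiableAt ℂ
      (fun ε : ℂ => ∫ x in Ioc (0:ℝ) 1,
        ((deriv G x : ℝ) : ℂ) * ((Real.log (Real.exp 1 / x) : ℝ) : ℂ) ^ (-ε)) ε₀ := by
    intro ε₀
    set m : ℕ := ⌈|ε₀.re|⌉₊ + 1 with hm_def
    have hm : -ε₀.re + 1 ≤ (m:ℝ) := by
      have h1 := Nat.le_ceil |ε₀.re|
      have h2 := neg_abs_le ε₀.re
      have h3 : ((m:ℝ)) = (⌈|ε₀.re|⌉₊ : ℝ) + 1 := by rw [hm_def]; push_cast; ring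
      linarith
    clear_value m
    have hdom := hasDerivAt_integral_of_dominated_loc_of_deriv_le
      (μ := volume.restrict (Ioc (0:ℝ) 1))
      (F := fun (ε : ℂ) (x : ℝ) =>
        ((deriv G x : ℝ) : ℂ) * ((Real.log (Real.exp 1 / x) : ℝ) : ℂ) ^ (-ε))
      (F' := fun (ε : ℂ) (x : ℝ) =>
        ((deriv G x : ℝ) : ℂ) * (((Real.log (Real.exp 1 / x) : ℝ) : ℂ) ^ (-ε) *
          Complex.log ((Real.log (Real.exp 1 / x) : ℝ) : ℂ) * (-1)))
      (x₀ := ε₀) (bound := fun x => K * (1 - Real.log x) ^ (m + 1))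
      (Metric.ball_mem_nhds ε₀ zero_lt_one)
      (Eventually.of_forall fun ε => haesm ε)
      ?_ ?_ ?_ ?_ ?_
    · exact hdom.2.differentiableAt
    · -- Integrable (F ε₀)
      refine Integrable.mono' ((integrableOn_pow_L (m+1)).const_mul K) (haesm ε₀) ?_
      filter_upwards [ae_restrict_mem measurableSet_Ioc] with x hx
      have hL := hLpos x hx
      have hL0 : (0:ℝ) < Real.log (Real.exp 1 / x) := by linarith
      rw [norm_mul, Complex.norm_cpow_eq_rpow_re_of_pos hL0]
      have h1 : ‖((deriv G x : ℝ) : ℂ)‖ ≤ K := by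
        rw [Complex.norm_real]; exact hK x ⟨hx.1.le, hx.2⟩
      have h2 : Real.log (Real.exp 1 / x) ^ (-ε₀).re ≤ (1 - Real.log x) ^ (m + 1) := by
        rw [← log_e_div hx.1]
        calc Real.log (Real.exp 1 / x) ^ (-ε₀).re
            ≤ Real.log (Real.exp 1 / x) ^ ((m+1 : ℕ) : ℝ) := by
              apply Real.rpow_le_rpow_of_exponent_le hL
              rw [Nat.cast_add, Nat.cast_one]
              simp only [Complex.neg_re]
              linarith
          _ = Real.log (Real.exp 1 / x) ^ (m + 1) := by
              rw [Real.rpow_natCast]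
      exact mul_le_mul h1 h2 (Real.rpow_nonneg hL0.le _) hK0
    · -- AESM F' ε₀
      have h1 : AEStronglyMeasurable
          (fun x : ℝ => Complex.log ((Real.log (Real.exp 1 / x) : ℝ) : ℂ) * (-1))
          (volume.restrict (Ioc (0:ℝ) 1)) := by
        apply ContinuousOn.aestronglyMeasurable ?_ measurableSet_Ioc
        intro x hx
        apply ContinuousAt.continuousWithinAt
        apply ContinuousAt.mul ?_ continuousAt_const
        apply (continuousAt_clog ?_).comp (hcb x hx)
        apply Complex.mem_slitPlane_iff.mpr
        left
        simp only [Complex.ofReal_re]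
        linarith [hLpos x hx]
      exact ((haesm ε₀).mul h1).congr (Eventually.of_forall fun x => by simp only [Pi.mul_apply]; ring)
    · -- bound
      filter_upwards [ae_restrict_mem measurableSet_Ioc] with x hx ε hε
      have hL := hLpos x hx
      have hL0 : (0:ℝ) < Real.log (Real.exp 1 / x) := by linarith
      have hre : -ε.re ≤ (m:ℝ) := by
        have : |(ε - ε₀).re| ≤ ‖ε - ε₀‖ := Complex.abs_re_le_norm _
        rw [Metric.mem_ball, Complex.dist_eq] at hε
        have h3 : |(ε - ε₀).re| < 1 := lt_of_le_of_lt this hε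
        rw [Complex.sub_re, abs_lt] at h3
        linarith
      have hnorm : ‖((deriv G x : ℝ) : ℂ) * (((Real.log (Real.exp 1 / x) : ℝ) : ℂ) ^ (-ε) *
          Complex.log ((Real.log (Real.exp 1 / x) : ℝ) : ℂ) * (-1))‖
          = ‖((deriv G x : ℝ) : ℂ)‖ *
            (Real.log (Real.exp 1 / x) ^ (-ε).re * Real.log (Real.log (Real.exp 1 / x))) := by
        rw [norm_mul, norm_mul, norm_mul, norm_neg, norm_one, mul_one,
          Complex.norm_cpow_eq_rpow_re_of_pos hL0, ← Complex.ofReal_log hL0.le]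
        simp only [Complex.norm_real, Real.norm_eq_abs, abs_of_nonneg (Real.log_nonneg hL)]
      rw [hnorm]
      have h1 : ‖((deriv G x : ℝ) : ℂ)‖ ≤ K := by
        rw [Complex.norm_real]; exact hK x ⟨hx.1.le, hx.2⟩
      have h2 : Real.log (Real.exp 1 / x) ^ (-ε).re ≤ Real.log (Real.exp 1 / x) ^ (m:ℕ) := by
        rw [← Real.rpow_natCast _ m]
        apply Real.rpow_le_rpow_of_exponent_le hL
        simpa using hre
      have h3 : Real.log (Real.log (Real.exp 1 / x)) ≤ Real.log (Real.exp 1 / x) := by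
        have := Real.log_le_sub_one_of_pos hL0
        linarith
      calc ‖((deriv G x : ℝ) : ℂ)‖ *
            (Real.log (Real.exp 1 / x) ^ (-ε).re * Real.log (Real.log (Real.exp 1 / x)))
          ≤ K * (Real.log (Real.exp 1 / x) ^ (m:ℕ) * Real.log (Real.exp 1 / x)) := by
            apply mul_le_mul h1 ?_ ?_ hK0
            · apply mul_le_mul h2 h3 (Real.log_nonneg hL) (by positivity)
            · apply mul_nonneg (Real.rpow_nonneg hL0.le _) (Real.log_nonneg hL)
        _ = K * (1 - Real.log x) ^ (m + 1) := by
            rw [log_e_div hx.1, ← pow_succ]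
    · exact (integrableOn_pow_L (m+1)).const_mul K
    · -- h_diff
      filter_upwards [ae_restrict_mem measurableSet_Ioc] with x hx ε _
      have hb : (((Real.log (Real.exp 1 / x)) : ℝ) : ℂ) ≠ 0 := by
        rw [Complex.ofReal_ne_zero]
        linarith [hLpos x hx]
      exact HasDerivAt.const_mul _ ((hasDerivAt_neg ε).const_cpow (Or.inl hb))
  have hdiff : Differentiable ℂ (fun ε : ℂ => - ∫ x in Ioc (0:ℝ) 1,
      ((deriv G x : ℝ) : ℂ) * ((Real.log (Real.exp 1 / x) : ℝ) : ℂ) ^ (-ε)) :=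
    fun ε₀ => (key ε₀).neg
  exact hdiff.differentiableOn.analyticOnNhd isOpen_univ

private lemma part2 (G : ℝ → ℝ) (hG : ContDiff ℝ 1 G) (hG1 : G 1 = 0) {ε : ℝ} (hε : 0 < ε) :
    (- ∫ x in Ioc (0:ℝ) 1,
        ((deriv G x : ℝ) : ℂ) * ((Real.log (Real.exp 1 / x) : ℝ) : ℂ) ^ (-(ε : ℂ)))
      = ((ε * ∫ x in Ioc (0:ℝ) 1,
          G x / (x * (Real.log (Real.exp 1 / x)) ^ (1 + ε)) : ℝ) : ℂ) := by
  have hderivG : Continuous (deriv G) := hG.continuous_deriv le_rfl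
  -- reduce to a real identity
  have hcast : (∫ x in Ioc (0:ℝ) 1,
      ((deriv G x : ℝ) : ℂ) * ((Real.log (Real.exp 1 / x) : ℝ) : ℂ) ^ (-(ε : ℂ)))
      = ((∫ x in Ioc (0:ℝ) 1, deriv G x * (1 - Real.log x) ^ (-ε) : ℝ) : ℂ) := by
    have h : EqOn (fun x : ℝ => ((deriv G x : ℝ) : ℂ) *
        ((Real.log (Real.exp 1 / x) : ℝ) : ℂ) ^ (-(ε : ℂ)))
        (fun x : ℝ => ((deriv G x * (1 - Real.log x) ^ (-ε) : ℝ) : ℂ)) (Ioc (0:ℝ) 1) := by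
      intro x hx
      have hL1 : (1:ℝ) ≤ 1 - Real.log x := L_ge_one hx.1 hx.2
      dsimp only
      rw [log_e_div hx.1, Complex.ofReal_mul,
        show (-(ε:ℂ)) = ((-ε : ℝ) : ℂ) from by push_cast; ring,
        ← Complex.ofReal_cpow (by linarith : (0:ℝ) ≤ 1 - Real.log x) (-ε)]
    rw [setIntegral_congr_fun measurableSet_Ioc h]
    exact integral_ofReal
  have hRHS : (∫ x in Ioc (0:ℝ) 1, G x / (x * (Real.log (Real.exp 1 / x)) ^ (1 + ε)))
      = ∫ x in Ioc (0:ℝ) 1, G x / (x * (1 - Real.log x) ^ (1 + ε)) := by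
    apply setIntegral_congr_fun measurableSet_Ioc
    intro x hx
    dsimp only
    rw [log_e_div hx.1]
  rw [hcast, hRHS, ← Complex.ofReal_neg, Complex.ofReal_inj]
  -- now a real statement
  set ψ : ℝ → ℝ := fun x => if x = 0 then 0 else (1 - Real.log x) ^ (-ε) with hψdef
  set d : ℝ → ℝ := fun x => ε / (x * (1 - Real.log x) ^ (1 + ε)) with hddef
  have hψd : ∀ x ∈ Ioo (0:ℝ) 1, HasDerivAt ψ (d x) x := by
    intro x hx
    have hx0 : 0 < x := hx.1
    have hL1 : (1:ℝ) ≤ 1 - Real.log x := L_ge_one hx0 hx.2.le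
    have h1 : HasDerivAt (fun t : ℝ => 1 - Real.log t) (-x⁻¹) x := by
      simpa using (Real.hasDerivAt_log hx0.ne').const_sub 1
    have h2 : HasDerivAt (fun t : ℝ => (1 - Real.log t) ^ (-ε))
        (-x⁻¹ * (-ε) * (1 - Real.log x) ^ (-ε - 1)) x :=
      h1.rpow_const (Or.inl (by linarith))
    have heq : ψ =ᶠ[𝓝 x] fun t => (1 - Real.log t) ^ (-ε) := by
      filter_upwards [eventually_ne_nhds hx0.ne'] with t ht
      simp [hψdef, ht]
    have := h2.congr_of_eventuallyEq heq
    refine HasDerivAt.congr_deriv this ?_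
    rw [hddef]
    simp only []
    rw [show -ε - 1 = -(1+ε) by ring, Real.rpow_neg (by linarith : (0:ℝ) ≤ 1 - Real.log x),
      div_eq_mul_inv, mul_inv]
    ring
  have hψ0 : Tendsto (fun t : ℝ => (1 - Real.log t) ^ (-ε)) (𝓝[>] (0:ℝ)) (𝓝 0) := by
    apply (tendsto_rpow_neg_atTop hε).comp
    have h1 : Tendsto (fun t : ℝ => -Real.log t) (𝓝[>] (0:ℝ)) atTop :=
      tendsto_neg_atTop_iff.mpr Real.tendsto_log_nhdsGT_zero
    have h2 := tendsto_atTop_add_const_left (𝓝[>] (0:ℝ)) 1 h1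
    apply h2.congr
    intro t; ring
  have hψcont : ContinuousOn ψ (Icc (0:ℝ) 1) := by
    intro x hx
    rcases eq_or_ne x 0 with rfl | hx0
    · have hsub : Icc (0:ℝ) 1 ⊆ {0} ∪ Ioi 0 := by
        intro t ht
        rcases eq_or_lt_of_le ht.1 with h | h
        · exact Or.inl (by simp [← h])
        · exact Or.inr h
      apply ContinuousWithinAt.mono _ hsub
      apply ContinuousWithinAt.union continuousWithinAt_singleton
      have hψ00 : ψ 0 = 0 := by simp [hψdef]
      unfold ContinuousWithinAt
      rw [hψ00]
      apply Tendsto.congr' _ hψ0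
      filter_upwards [self_mem_nhdsWithin] with t ht
      simp [hψdef, (ne_of_gt (Set.mem_Ioi.mp ht))]
    · have hx0' : 0 < x := lt_of_le_of_ne hx.1 (Ne.symm hx0)
      apply ContinuousAt.continuousWithinAt
      have hca : ContinuousAt (fun t : ℝ => (1 - Real.log t) ^ (-ε)) x := by
        apply ContinuousAt.rpow_const
        · exact continuousAt_const.sub (Real.continuousAt_log hx0)
        · left
          have := L_ge_one hx0' hx.2
          linarith
      apply hca.congr
      filter_upwards [eventually_ne_nhds hx0] with t ht
      simp [hψdef, ht]
  have hdnonneg : ∀ x ∈ Ioo (0:ℝ) 1, 0 ≤ d x := by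
    intro x hx
    have hL1 : (1:ℝ) ≤ 1 - Real.log x := L_ge_one hx.1 hx.2.le
    have : (0:ℝ) < (1 - Real.log x) ^ (1 + ε) := Real.rpow_pos_of_pos (by linarith) _
    rw [hddef]
    apply div_nonneg hε.le
    exact mul_nonneg hx.1.le this.le
  have hdint : IntegrableOn d (Ioc (0:ℝ) 1) :=
    intervalIntegral.integrableOn_deriv_of_nonneg hψcont hψd hdnonneg
  -- the two summands
  obtain ⟨K, hK⟩ := (isCompact_Icc (a := (0:ℝ)) (b := 1)).exists_bound_of_continuousOn
    hG.continuous.continuousOn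
  obtain ⟨K', hK'⟩ := (isCompact_Icc (a := (0:ℝ)) (b := 1)).exists_bound_of_continuousOn
    hderivG.continuousOn
  have hf2int : IntegrableOn (fun x => G x * d x) (Ioc (0:ℝ) 1) := by
    apply hdint.bdd_mul (c := K)
    · exact hG.continuous.aestronglyMeasurable.restrict
    · filter_upwards [ae_restrict_mem measurableSet_Ioc] with x hx
      exact hK x ⟨hx.1.le, hx.2⟩
  have hf1int : IntegrableOn (fun x => deriv G x * (1 - Real.log x) ^ (-ε)) (Ioc (0:ℝ) 1) := by
    have hK'0 : 0 ≤ K' := le_trans (norm_nonneg _) (hK' 0 ⟨le_rfl, zero_le_one⟩)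
    apply Integrable.mono' (g := fun _ => K')
    · exact integrableOn_const (C := K') measure_Ioc_lt_top.ne
    · apply ContinuousOn.aestronglyMeasurable ?_ measurableSet_Ioc
      apply ContinuousOn.mul hderivG.continuousOn
      apply ContinuousOn.rpow_const
      · apply continuousOn_const.sub (Real.continuousOn_log.mono ?_)
        intro t ht
        simp only [Set.mem_compl_iff, Set.mem_singleton_iff]
        exact ht.1.ne'
      · intro t ht
        left
        have := L_ge_one ht.1 ht.2
        linarith
    · filter_upwards [ae_restrict_mem measurableSet_Ioc] with x hx
      have hL1 : (1:ℝ) ≤ 1 - Real.log x := L_ge_one hx.1 hx.2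
      rw [norm_mul]
      have h1 : ‖deriv G x‖ ≤ K' := hK' x ⟨hx.1.le, hx.2⟩
      have h2 : ‖(1 - Real.log x) ^ (-ε)‖ ≤ 1 := by
        rw [Real.norm_eq_abs, abs_of_nonneg (Real.rpow_nonneg (by linarith) _)]
        exact Real.rpow_le_one_of_one_le_of_nonpos hL1 (by linarith)
      calc ‖deriv G x‖ * ‖(1 - Real.log x) ^ (-ε)‖ ≤ K' * 1 :=
            mul_le_mul h1 h2 (norm_nonneg _) hK'0
        _ = K' := mul_one K'
  -- FTC
  set Φ : ℝ → ℝ := fun x => G x * ψ x with hΦdef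
  have hΦcont : ContinuousOn Φ (Icc (0:ℝ) 1) := hG.continuous.continuousOn.mul hψcont
  have hΦderiv : ∀ x ∈ Ioo (0:ℝ) 1, HasDerivWithinAt Φ
      (deriv G x * (1 - Real.log x) ^ (-ε) + G x * d x) (Ioi x) x := by
    intro x hx
    have h := ((hG.differentiable one_ne_zero).differentiableAt.hasDerivAt (x := x)).mul (hψd x hx)
    have hh : ψ x = (1 - Real.log x) ^ (-ε) := by simp [hψdef, (ne_of_gt hx.1)]
    rw [hh] at h
    exact h.hasDerivWithinAt
  have hint : IntervalIntegrable (fun x => deriv G x * (1 - Real.log x) ^ (-ε) + G x * d x)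
      volume 0 1 :=
    (intervalIntegrable_iff_integrableOn_Ioc_of_le zero_le_one).2 (hf1int.add hf2int)
  have hFTC := intervalIntegral.integral_eq_sub_of_hasDeriv_right_of_le zero_le_one
    hΦcont hΦderiv hint
  rw [intervalIntegral.integral_of_le zero_le_one] at hFTC
  have hΦ1 : Φ 1 = 0 := by simp [hΦdef, hG1]
  have hΦ0 : Φ 0 = 0 := by simp [hΦdef, hψdef]
  rw [hΦ1, hΦ0, sub_zero, integral_add hf1int hf2int] at hFTC
  -- conclude
  have hsplit : (∫ x in Ioc (0:ℝ) 1, G x * d x)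
      = ε * ∫ x in Ioc (0:ℝ) 1, G x / (x * (1 - Real.log x) ^ (1 + ε)) := by
    rw [← integral_const_mul]
    apply setIntegral_congr_fun measurableSet_Ioc
    intro x _
    simp only [hddef]
    ring
  linarith [hFTC, hsplit]

theorem residue_function_analytic_continuation (G : ℝ → ℝ) (hG : ContDiff ℝ 1 G)
    (hsupp : ∃ a : ℝ, a < 1 ∧ ∀ x, a ≤ x → G x = 0) :
    AnalyticOnNhd ℂ
        (fun ε : ℂ => - ∫ x in Ioc (0:ℝ) 1,
          ((deriv G x : ℝ) : ℂ) * ((Real.log (Real.exp 1 / x) : ℝ) : ℂ) ^ (-ε)) Set.univ ∧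
      (∀ ε : ℝ, 0 < ε →
        (- ∫ x in Ioc (0:ℝ) 1,
            ((deriv G x : ℝ) : ℂ) * ((Real.log (Real.exp 1 / x) : ℝ) : ℂ) ^ (-(ε : ℂ)))
          = ((ε * ∫ x in Ioc (0:ℝ) 1,
              G x / (x * (Real.log (Real.exp 1 / x)) ^ (1 + ε)) : ℝ) : ℂ)) ∧
      (- ∫ x in Ioc (0:ℝ) 1,
          ((deriv G x : ℝ) : ℂ) * ((Real.log (Real.exp 1 / x) : ℝ) : ℂ) ^ (-(0 : ℂ)))
        = ((G 0 : ℝ) : ℂ) := by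
  obtain ⟨a, ha1, ha⟩ := hsupp
  have hG1 : G 1 = 0 := ha 1 ha1.le
  refine ⟨part1 G hG, fun ε hε => part2 G hG hG1 hε, ?_⟩
  have h1 : EqOn (fun x : ℝ => ((deriv G x : ℝ) : ℂ) *
      ((Real.log (Real.exp 1 / x) : ℝ) : ℂ) ^ (-(0:ℂ)))
      (fun x : ℝ => ((deriv G x : ℝ) : ℂ)) (Ioc (0:ℝ) 1) := by
    intro x _
    dsimp only
    rw [neg_zero, Complex.cpow_zero, mul_one]
  rw [setIntegral_congr_fun measurableSet_Ioc h1]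
  have h3 : (∫ x in Ioc (0:ℝ) 1, ((deriv G x : ℝ) : ℂ))
      = ((∫ x in Ioc (0:ℝ) 1, deriv G x : ℝ) : ℂ) := integral_ofReal
  rw [h3]
  have h2 : (∫ x in Ioc (0:ℝ) 1, deriv G x) = G 1 - G 0 := by
    rw [← intervalIntegral.integral_of_le zero_le_one]
    apply intervalIntegral.integral_deriv_eq_sub
    · intro x _
      exact (hG.differentiable one_ne_zero).differentiableAt
    · exact (hG.continuous_deriv le_rfl).intervalIntegrable 0 1
  rw [h2, hG1]
  push_cast
  ring
end

section
/- Let g : 𝔻̄ × W → ℝ be a continuous bounded function on the closed unit disc times a compact metric space W with finite measure μ, and suppose ψ(z, w) = ν log|z|² with ν > 0. Then lim_{t → −∞} ∫_{{t < ψ < t+1}} g(z,w) · (1/|z|²) dλ(z) dμ(w) = (π/ν) ∫_W g(0, w) dμ(w). -/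
open MeasureTheory Filter Topology Real Set


lemma annulus_measurable (a b : ℝ) : MeasurableSet {z : ℂ | a < ‖z‖ ∧ ‖z‖ < b} := by
  apply MeasurableSet.inter
  · exact measurableSet_lt measurable_const continuous_norm.measurable
  · exact measurableSet_lt continuous_norm.measurable measurable_const

lemma annulus_integral {a b : ℝ} (ha : 0 < a) (hab : a < b) :
    ∫ z in {z : ℂ | a < ‖z‖ ∧ ‖z‖ < b}, 1 / ‖z‖ ^ 2 =
      2 * π * (Real.log b - Real.log a) := by
  have hset : ∀ z : ℂ, (z ∈ {z : ℂ | a < ‖z‖ ∧ ‖z‖ < b}) ↔ ‖z‖ ∈ Ioo a b := by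
    intro z; simp [mem_Ioo]
  have h1 : ∫ z in {z : ℂ | a < ‖z‖ ∧ ‖z‖ < b}, 1 / ‖z‖ ^ 2 =
      ∫ z : ℂ, (Ioo a b).indicator (fun r => 1 / r ^ 2) ‖z‖ := by
    rw [← integral_indicator (annulus_measurable a b)]
    refine integral_congr_ae (Eventually.of_forall fun z => ?_)
    by_cases hz : z ∈ {z : ℂ | a < ‖z‖ ∧ ‖z‖ < b}
    · rw [indicator_of_mem hz]
      exact (indicator_of_mem ((hset z).1 hz) (fun r : ℝ => 1 / r ^ 2)).symm
    · rw [indicator_of_notMem hz]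
      exact (indicator_of_notMem (fun h => hz ((hset z).2 h)) (fun r : ℝ => 1 / r ^ 2)).symm
  rw [h1, integral_fun_norm_addHaar (volume : Measure ℂ) (fun r => (Ioo a b).indicator (fun r => 1 / r ^ 2) r)]
  rw [Complex.finrank_real_complex]
  have h2 : ∫ y in Ioi (0:ℝ), y ^ (2 - 1) • (Ioo a b).indicator (fun r => 1 / r ^ 2) y
      = ∫ y in Ioo a b, 1 / y := by
    rw [show (2 - 1 : ℕ) = 1 from rfl]
    have : ∀ y : ℝ, y ^ 1 • (Ioo a b).indicator (fun r => 1 / r ^ 2) y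
        = (Ioo a b).indicator (fun r => 1 / r) y := by
      intro y
      by_cases hy : y ∈ Ioo a b
      · rw [indicator_of_mem hy, indicator_of_mem hy]
        have : y ≠ 0 := by nlinarith [hy.1]
        simp only [smul_eq_mul, pow_one]; field_simp
      · rw [indicator_of_notMem hy, indicator_of_notMem hy, smul_zero]
    simp_rw [this]
    rw [setIntegral_indicator measurableSet_Ioo, show Ioi (0:ℝ) ∩ Ioo a b = Ioo a b from inter_eq_right.2 (fun y hy => lt_trans ha hy.1)]
  rw [h2]
  have h3 : ∫ y in Ioo a b, 1 / y = Real.log b - Real.log a := by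
    rw [← integral_Ioc_eq_integral_Ioo, ← intervalIntegral.integral_of_le hab.le,
      integral_one_div, Real.log_div (by linarith) (by linarith)]
    intro h
    rcases h with h
    simp [Set.uIcc_of_le hab.le] at h
    linarith [h.1]
  rw [h3]
  simp [Measure.real, Complex.volume_ball]
  ring


set_option maxHeartbeats 1000000 in
/-- Model computation of the Ohsawa measure: for `ψ(z,w) = ν log |z|²`, the integrals of
`g/|z|²` over the bands `{t < ψ < t+1}` converge, as `t → -∞`, to `(π/ν) ∫_W g(0,·)`. -/
theorem ohsawa_measure_model {W : Type*} [MetricSpace W] [CompactSpace W]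
    [MeasurableSpace W] [BorelSpace W] (μ : Measure W) [IsFiniteMeasure μ]
    (ν : ℝ) (hν : 0 < ν) (g : ℂ × W → ℝ) (hg : Continuous g) (hb : ∃ M, ∀ p, |g p| ≤ M) :
    Tendsto (fun t : ℝ =>
        ∫ p in {p : ℂ × W | t < ν * Real.log (‖p.1‖ ^ 2) ∧
            ν * Real.log (‖p.1‖ ^ 2) < t + 1},
          g p / ‖p.1‖ ^ 2 ∂((volume : Measure ℂ).prod μ))
      atBot (𝓝 ((Real.pi / ν) * ∫ w, g (0, w) ∂μ)) := by
  obtain ⟨M₀, hM₀⟩ := hb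
  set M := max M₀ 0 with hMdef
  have hM : ∀ p, |g p| ≤ M := fun p => le_trans (hM₀ p) (le_max_left _ _)
  set c := ∫ w, g (0, w) ∂μ with hc
  set m := (μ univ).toReal with hm
  have hm0 : 0 ≤ m := ENNReal.toReal_nonneg
  set G : C(ℂ, C(W, ℝ)) := ContinuousMap.curry ⟨g, hg⟩ with hGdef
  have φcont : Continuous fun z => ‖G z - G 0‖ :=
    (G.continuous.sub continuous_const).norm
  have φbound : ∀ z w, |g (z, w) - g (0, w)| ≤ ‖G z - G 0‖ := by
    intro z w
    have h1 := (G z - G 0).norm_coe_le_norm w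
    have h2 : (G z - G 0) w = g (z, w) - g (0, w) := by
      simp [hGdef, ContinuousMap.curry_apply]
    rw [h2] at h1
    simpa [Real.norm_eq_abs] using h1
  have h2ν : 0 < 2 * ν := by linarith
  rw [Metric.tendsto_nhds]
  intro ε hε
  rw [eventually_atBot]
  set ε' := ε * ν / (π * (m + 1)) with hε'def
  have hε'pos : 0 < ε' := by
    have := Real.pi_pos
    positivity
  obtain ⟨δ, hδpos, hδ⟩ := Metric.continuousAt_iff.1 φcont.continuousAt ε' hε'pos
  refine ⟨min (-1) (2 * ν * Real.log δ - 1) - 1, fun t ht => ?_⟩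
  have ht1 : t ≤ -1 := le_trans ht (by linarith [min_le_left (-1 : ℝ) (2 * ν * Real.log δ - 1)])
  have ht2 : t + 1 < 2 * ν * Real.log δ := by
    have := min_le_right (-1 : ℝ) (2 * ν * Real.log δ - 1)
    linarith
  set a := Real.exp (t / (2 * ν)) with hadef
  set b := Real.exp ((t + 1) / (2 * ν)) with hbdef
  have ha : 0 < a := Real.exp_pos _
  have hab : a < b := Real.exp_lt_exp.2 (by gcongr <;> linarith)
  have hb1 : b ≤ 1 := by
    have h0 : (t + 1) / (2 * ν) ≤ 0 :=
      div_nonpos_of_nonpos_of_nonneg (by linarith) (by linarith)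
    calc b = Real.exp ((t + 1) / (2 * ν)) := hbdef
      _ ≤ Real.exp 0 := Real.exp_le_exp.2 h0
      _ = 1 := Real.exp_zero
  have hbδ : b < δ := by
    rw [hbdef, ← Real.exp_log hδpos]
    exact Real.exp_lt_exp.2 ((div_lt_iff₀ h2ν).2 (by linarith))
  set A := {z : ℂ | a < ‖z‖ ∧ ‖z‖ < b} with hAdef
  have mA : MeasurableSet A := annulus_measurable a b
  -- set equality
  have hSeq : {p : ℂ × W | t < ν * Real.log (‖p.1‖ ^ 2) ∧
      ν * Real.log (‖p.1‖ ^ 2) < t + 1} = A ×ˢ univ := by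
    ext p
    simp only [mem_setOf_eq, mem_prod, mem_univ, and_true, hAdef]
    have key : ∀ z : ℂ, z ≠ 0 →
        ((t < ν * Real.log (‖z‖ ^ 2) ↔ a < ‖z‖) ∧
         (ν * Real.log (‖z‖ ^ 2) < t + 1 ↔ ‖z‖ < b)) := by
      intro z hz
      have habs : 0 < ‖z‖ := norm_pos_iff.mpr hz
      have hlog : ν * Real.log (‖z‖ ^ 2) = 2 * ν * Real.log (‖z‖) := by
        rw [Real.log_pow]; push_cast; ring
      constructor
      · rw [hlog, hadef, ← Real.lt_log_iff_exp_lt habs, div_lt_iff₀ h2ν]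
        constructor <;> intro h <;> linarith
      · rw [hlog, hbdef, ← Real.log_lt_iff_lt_exp habs, lt_div_iff₀ h2ν]
        constructor <;> intro h <;> linarith
    by_cases hz : p.1 = 0
    · simp only [hz]
      constructor
      · rintro ⟨h1, h2⟩
        exfalso
        simp only [norm_zero] at h2
        rw [show ((0:ℝ)^2) = 0 by norm_num, Real.log_zero, mul_zero] at h2
        linarith
      · rintro ⟨h1, h2⟩
        exfalso
        simp only [norm_zero] at h1
        linarith
    · exact and_congr ((key p.1 hz).1) ((key p.1 hz).2)
  rw [hSeq]
  -- the annulus integral value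
  have hval : ∫ z in A, 1 / ‖z‖ ^ 2 = π / ν := by
    rw [hAdef, annulus_integral ha hab, hadef, hbdef, Real.log_exp, Real.log_exp]
    field_simp
    ring
  -- finiteness of the measure of the band
  have hAball : A ⊆ Metric.ball (0 : ℂ) 1 := by
    intro z hz
    rw [Metric.mem_ball, dist_zero_right]
    exact lt_of_lt_of_le hz.2 hb1
  have hμfin : ((volume : Measure ℂ).prod μ) (A ×ˢ univ) < ⊤ := by
    rw [Measure.prod_prod]
    have hball : (volume : Measure ℂ) (Metric.ball (0 : ℂ) 1) < ⊤ := measure_ball_lt_top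
    exact ENNReal.mul_lt_top (lt_of_le_of_lt (measure_mono hAball) hball)
      (measure_lt_top μ univ)
  -- integrability helper
  have hint : ∀ (F : ℂ × W → ℝ) (C : ℝ), Measurable F →
      (∀ p ∈ A ×ˢ (univ : Set W), |F p| ≤ C) →
      IntegrableOn F (A ×ˢ univ) ((volume : Measure ℂ).prod μ) := by
    intro F C hFm hFb
    refine Integrable.mono' (g := fun _ => C) (integrableOn_const (C := C) hμfin.ne enorm_ne_top)
      hFm.aestronglyMeasurable ?_
    refine (ae_restrict_iff' (mA.prod MeasurableSet.univ)).2 (ae_of_all _ fun p hp => ?_)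
    simpa [Real.norm_eq_abs] using hFb p hp
  have habsm : Measurable fun p : ℂ × W => ‖p.1‖ ^ 2 :=
    ((continuous_norm.measurable.comp measurable_fst).pow_const 2)
  have hzbound : ∀ p : ℂ × W, p ∈ A ×ˢ (univ : Set W) →
      a ^ 2 < ‖p.1‖ ^ 2 := by
    intro p hp
    have := hp.1.1
    nlinarith
  set F : ℂ × W → ℝ := fun p => g p / ‖p.1‖ ^ 2 with hF
  set F0 : ℂ × W → ℝ := fun p => g (0, p.2) / ‖p.1‖ ^ 2 with hF0
  have hFint : IntegrableOn F (A ×ˢ univ) ((volume : Measure ℂ).prod μ) := by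
    refine hint F (M / a ^ 2) (hg.measurable.div habsm) fun p hp => ?_
    rw [abs_div, abs_of_pos (by nlinarith [hzbound p hp] : (0:ℝ) < ‖p.1‖ ^ 2)]
    exact div_le_div₀ (by positivity) (hM p) (by positivity) (le_of_lt (hzbound p hp))
  have hF0int : IntegrableOn F0 (A ×ˢ univ) ((volume : Measure ℂ).prod μ) := by
    refine hint F0 (M / a ^ 2)
      ((hg.comp (continuous_const.prodMk continuous_snd)).measurable.div habsm) fun p hp => ?_
    rw [abs_div, abs_of_pos (by nlinarith [hzbound p hp] : (0:ℝ) < ‖p.1‖ ^ 2)]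
    exact div_le_div₀ (by positivity) (hM _) (by positivity) (le_of_lt (hzbound p hp))
  set bound : ℂ × W → ℝ := fun p => ε' / ‖p.1‖ ^ 2 with hbd
  have hboundint : IntegrableOn bound (A ×ˢ univ) ((volume : Measure ℂ).prod μ) := by
    refine hint bound (ε' / a ^ 2) (measurable_const.div habsm) fun p hp => ?_
    rw [abs_div, abs_of_pos (by nlinarith [hzbound p hp] : (0:ℝ) < ‖p.1‖ ^ 2),
      abs_of_pos hε'pos]
    exact div_le_div₀ (by positivity) le_rfl (by positivity) (le_of_lt (hzbound p hp))
  -- value of ∫ F0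
  have hI0 : ∫ p in A ×ˢ univ, F0 p ∂((volume : Measure ℂ).prod μ) = π / ν * c := by
    calc ∫ p in A ×ˢ univ, F0 p ∂((volume : Measure ℂ).prod μ)
        = ∫ p in A ×ˢ (univ : Set W), (fun z => 1 / ‖z‖ ^ 2) p.1 *
            (fun w => g (0, w)) p.2 ∂((volume : Measure ℂ).prod μ) := by
          refine integral_congr_ae (Eventually.of_forall fun p => ?_)
          simp only [hF0, one_div, inv_mul_eq_div]
      _ = (∫ z in A, 1 / ‖z‖ ^ 2) * ∫ w in (univ : Set W), g (0, w) ∂μ :=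
          setIntegral_prod_mul (fun z : ℂ => 1 / ‖z‖ ^ 2) (fun w => g (0, w)) A univ
      _ = π / ν * c := by rw [hval, hc, Measure.restrict_univ]
  -- value of ∫ bound
  have hIb : ∫ p in A ×ˢ univ, bound p ∂((volume : Measure ℂ).prod μ) = ε' * (π / ν) * m := by
    calc ∫ p in A ×ˢ univ, bound p ∂((volume : Measure ℂ).prod μ)
        = ∫ p in A ×ˢ (univ : Set W), (fun z => ε' * (1 / ‖z‖ ^ 2)) p.1 *
            (fun _ : W => (1:ℝ)) p.2 ∂((volume : Measure ℂ).prod μ) := by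
          refine integral_congr_ae (Eventually.of_forall fun p => ?_)
          simp only [hbd, mul_one, one_div, ← div_eq_mul_inv]
      _ = (∫ z in A, ε' * (1 / ‖z‖ ^ 2)) * ∫ _ in (univ : Set W), (1:ℝ) ∂μ :=
          setIntegral_prod_mul (fun z : ℂ => ε' * (1 / ‖z‖ ^ 2)) (fun _ => (1:ℝ)) A univ
      _ = ε' * (π / ν) * m := by
          rw [integral_const_mul, hval]
          simp [hm, mul_assoc, Measure.real]
  -- pointwise bound on the band
  have hptwise : ∀ p ∈ A ×ˢ (univ : Set W), ‖F p - F0 p‖ ≤ bound p := by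
    intro p hp
    have habs : (0:ℝ) < ‖p.1‖ ^ 2 := by nlinarith [hzbound p hp]
    have hdiff : F p - F0 p = (g p - g (0, p.2)) / ‖p.1‖ ^ 2 := by
      rw [hF, hF0]; simp only; rw [div_sub_div_same]
    rw [hdiff, hbd, Real.norm_eq_abs, abs_div, abs_of_pos habs]
    have hφ : ‖G p.1 - G 0‖ < ε' := by
      have h1 : dist p.1 0 < δ := by
        rw [dist_zero_right]
        exact lt_trans hp.1.2 hbδ
      have h2 := hδ h1
      rwa [Real.dist_eq, sub_self, norm_zero, sub_zero,
        abs_of_nonneg (norm_nonneg _)] at h2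
    have hnum : |g p - g (0, p.2)| ≤ ε' := by
      have := φbound p.1 p.2
      simp only [Prod.mk.eta] at this
      exact le_trans this hφ.le
    exact (div_le_div_iff_of_pos_right habs).2 hnum
  -- final estimate
  rw [Real.dist_eq, ← hI0, ← integral_sub hFint hF0int]
  have hle : |∫ p in A ×ˢ univ, (F p - F0 p) ∂((volume : Measure ℂ).prod μ)| ≤
      ∫ p in A ×ˢ univ, bound p ∂((volume : Measure ℂ).prod μ) := by
    rw [← Real.norm_eq_abs]
    exact norm_integral_le_of_norm_le hboundint
      ((ae_restrict_iff' (mA.prod MeasurableSet.univ)).2 (ae_of_all _ hptwise))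
  refine lt_of_le_of_lt hle ?_
  rw [hIb]
  have hq : ε' * (π / ν) * m = ε * (m / (m + 1)) := by
    rw [hε'def]
    have hπ := Real.pi_pos
    field_simp
  rw [hq]
  have h9 : m / (m + 1) < 1 := (div_lt_one (by linarith)).2 (by linarith)
  nlinarith
end
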